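/- For all real a, b ≥ 0, α ∈ (0,1), and 0 < m < M < ∞, the truncated infimum approximates the geometric mean with explicit error: |a^α · b^(1-α) − inf_{c ∈ [m,M]} (α c^(1-α) a + (1-α) c^(-α) b)| ≤ α · a · m^(1-α) + (1-α) · b · M^(-α). -/
import Mathlib


theorem truncated_inf_approx_geometric_mean (a b α m M : ℝ) (ha : 0 ≤ a) (hb : 0 ≤ b)
    (hα : α ∈ Set.Ioo (0:ℝ) 1) (hm : 0 < m) (hmM : m < M) :
    |a ^ α * b ^ (1 - α) -
        sInf ((fun c : ℝ => α * c ^ (1 - α) * a + (1 - α) * c ^ (-α) * b) '' Set.Icc m M)| ≤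
      α * a * m ^ (1 - α) + (1 - α) * b * M ^ (-α) := by
  obtain ⟨hα0, hα1⟩ := hα
  have hM : (0:ℝ) < M := hm.trans hmM
  have h1α : (0:ℝ) < 1 - α := by linarith
  have hsum1 : α + (1 - α) = (1:ℝ) := by ring
  have hsumne : α + (1 - α) ≠ (0:ℝ) := by rw [hsum1]; exact one_ne_zero
  set f : ℝ → ℝ := fun c : ℝ => α * c ^ (1 - α) * a + (1 - α) * c ^ (-α) * b with hf
  set g : ℝ := a ^ α * b ^ (1 - α) with hg
  have hg0 : 0 ≤ g := mul_nonneg (Real.rpow_nonneg ha _) (Real.rpow_nonneg hb _)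
  have hR : 0 ≤ α * a * m ^ (1 - α) + (1 - α) * b * M ^ (-α) := by
    have := Real.rpow_nonneg hm.le (1 - α)
    have := Real.rpow_nonneg hM.le (-α)
    positivity
  have hSne : (f '' Set.Icc m M).Nonempty := ⟨f m, ⟨m, ⟨le_rfl, hmM.le⟩, rfl⟩⟩
  -- lower bound : every element of the image is ≥ g (weighted AM-GM)
  have hlow : ∀ x ∈ f '' Set.Icc m M, g ≤ x := by
    rintro x ⟨c, ⟨hc1, _⟩, rfl⟩
    have hc : 0 < c := hm.trans_le hc1
    have key := Real.geom_mean_le_arith_mean2_weighted (w₁ := α) (w₂ := 1 - α)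
      (p₁ := c ^ (1 - α) * a) (p₂ := c ^ (-α) * b) hα0.le h1α.le
      (mul_nonneg (Real.rpow_nonneg hc.le _) ha)
      (mul_nonneg (Real.rpow_nonneg hc.le _) hb) hsum1
    have hcalc : (c ^ (1 - α) * a) ^ α * (c ^ (-α) * b) ^ (1 - α) = g := by
      rw [Real.mul_rpow (Real.rpow_nonneg hc.le _) ha,
        Real.mul_rpow (Real.rpow_nonneg hc.le _) hb,
        ← Real.rpow_mul hc.le, ← Real.rpow_mul hc.le]
      have e : c ^ ((1 - α) * α) * a ^ α * (c ^ (-α * (1 - α)) * b ^ (1 - α))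
          = c ^ ((1 - α) * α) * c ^ (-α * (1 - α)) * (a ^ α * b ^ (1 - α)) := by ring
      rw [e, ← Real.rpow_add hc]
      have e2 : (1 - α) * α + -α * (1 - α) = 0 := by ring
      rw [e2, Real.rpow_zero, one_mul, hg]
    rw [hcalc] at key
    simpa [hf, mul_assoc] using key
  have hbdd : BddBelow (f '' Set.Icc m M) := ⟨g, fun x hx => hlow x hx⟩
  have hglow : g ≤ sInf (f '' Set.Icc m M) := le_csInf hSne hlow
  -- upper bound: sInf ≤ g + R
  have hup : sInf (f '' Set.Icc m M) ≤ g + (α * a * m ^ (1 - α) + (1 - α) * b * M ^ (-α)) := by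
    by_cases hcase1 : b ≤ a * m
    · -- use c = m
      have hmem : f m ∈ f '' Set.Icc m M := ⟨m, ⟨le_rfl, hmM.le⟩, rfl⟩
      have h1 : sInf (f '' Set.Icc m M) ≤ f m := csInf_le hbdd hmem
      have h2 : m ^ (-α) * b ≤ g := by
        have hb' : b = b ^ α * b ^ (1 - α) := by
          rw [← Real.rpow_add' hb hsumne, hsum1, Real.rpow_one]
        have hba : b ^ α ≤ (a * m) ^ α := Real.rpow_le_rpow hb hcase1 hα0.le
        rw [Real.mul_rpow ha hm.le] at hba
        calc m ^ (-α) * b = m ^ (-α) * (b ^ α * b ^ (1 - α)) := by rw [← hb']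
          _ ≤ m ^ (-α) * ((a ^ α * m ^ α) * b ^ (1 - α)) := by
              apply mul_le_mul_of_nonneg_left _ (Real.rpow_nonneg hm.le _)
              exact mul_le_mul_of_nonneg_right hba (Real.rpow_nonneg hb _)
          _ = (m ^ (-α) * m ^ α) * (a ^ α * b ^ (1 - α)) := by ring
          _ = g := by rw [← Real.rpow_add hm]; simp [hg]
      have h3 : (1 - α) * m ^ (-α) * b ≤ g :=
        calc (1 - α) * m ^ (-α) * b = (1 - α) * (m ^ (-α) * b) := by ring
          _ ≤ 1 * g := mul_le_mul (by linarith) h2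
                (mul_nonneg (Real.rpow_nonneg hm.le _) hb) zero_le_one
          _ = g := one_mul g
      have hfm : f m = α * m ^ (1 - α) * a + (1 - α) * m ^ (-α) * b := rfl
      have hE : 0 ≤ (1 - α) * b * M ^ (-α) :=
        mul_nonneg (mul_nonneg h1α.le hb) (Real.rpow_nonneg hM.le _)
      nlinarith [h1, h3, hfm, hE]
    · by_cases hcase2 : a * M ≤ b
      · -- use c = M
        have hmem : f M ∈ f '' Set.Icc m M := ⟨M, ⟨hmM.le, le_rfl⟩, rfl⟩
        have h1 : sInf (f '' Set.Icc m M) ≤ f M := csInf_le hbdd hmem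
        have h2 : M ^ (1 - α) * a ≤ g := by
          have ha' : a = a ^ α * a ^ (1 - α) := by
            rw [← Real.rpow_add' ha hsumne, hsum1, Real.rpow_one]
          have hab : (a * M) ^ (1 - α) ≤ b ^ (1 - α) :=
            Real.rpow_le_rpow (mul_nonneg ha hM.le) hcase2 h1α.le
          rw [Real.mul_rpow ha hM.le] at hab
          calc M ^ (1 - α) * a = a ^ α * (a ^ (1 - α) * M ^ (1 - α)) := by
                conv_lhs => rw [ha']
                ring
            _ ≤ a ^ α * b ^ (1 - α) :=
                mul_le_mul_of_nonneg_left hab (Real.rpow_nonneg ha _)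
            _ = g := rfl
        have h3 : α * M ^ (1 - α) * a ≤ g :=
          calc α * M ^ (1 - α) * a = α * (M ^ (1 - α) * a) := by ring
            _ ≤ 1 * g := mul_le_mul hα1.le h2
                  (mul_nonneg (Real.rpow_nonneg hM.le _) ha) zero_le_one
            _ = g := one_mul g
        have hfM : f M = α * M ^ (1 - α) * a + (1 - α) * M ^ (-α) * b := rfl
        have hE : 0 ≤ α * a * m ^ (1 - α) :=
          mul_nonneg (mul_nonneg hα0.le ha) (Real.rpow_nonneg hm.le _)
        nlinarith [h1, h3, hfM, hE]
      · -- a*m < b < a*M ; use c = b/a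
        push_neg at hcase1 hcase2
        have hb0 : 0 < b := lt_of_le_of_lt (mul_nonneg ha hm.le) hcase1
        have ha0 : 0 < a := by
          by_contra h
          push_neg at h
          have h0 : a = 0 := le_antisymm h ha
          rw [h0] at hcase2
          simp at hcase2
          linarith
        set c := b / a with hc
        have hc0 : 0 < c := div_pos hb0 ha0
        have hcm : m ≤ c := (le_div_iff₀ ha0).2 (by nlinarith)
        have hcM : c ≤ M := (div_le_iff₀ ha0).2 (by nlinarith)
        have hmem : f c ∈ f '' Set.Icc m M := ⟨c, ⟨hcm, hcM⟩, rfl⟩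
        have h1 : sInf (f '' Set.Icc m M) ≤ f c := csInf_le hbdd hmem
        have hfc : f c = g := by
          have e1 : c ^ (1 - α) * a = a ^ α * b ^ (1 - α) := by
            rw [hc, Real.div_rpow hb ha]
            rw [div_mul_eq_mul_div, div_eq_iff (ne_of_gt (Real.rpow_pos_of_pos ha0 _))]
            rw [mul_right_comm, ← Real.rpow_add ha0, hsum1, Real.rpow_one]
            ring
          have e2 : c ^ (-α) * b = a ^ α * b ^ (1 - α) := by
            rw [hc, Real.div_rpow hb ha]
            rw [div_mul_eq_mul_div, div_eq_iff (ne_of_gt (Real.rpow_pos_of_pos ha0 _))]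
            have hbb : b ^ (-α) * b = b ^ (1 - α) := by
              nth_rewrite 2 [← Real.rpow_one b]
              rw [← Real.rpow_add hb0]
              ring_nf
            have haa : a ^ α * a ^ (-α) = 1 := by
              rw [← Real.rpow_add ha0]; simp
            rw [hbb, mul_right_comm, haa, one_mul]
          show α * (c ^ (1 - α)) * a + (1 - α) * (c ^ (-α)) * b = g
          rw [mul_assoc, e1, mul_assoc, e2, hg]
          ring
        rw [hfc] at h1
        linarith
  rw [abs_le]
  constructor <;> nlinarith [hglow, hup, hR]
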